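/- Let r ≥ 2, 1 ≤ s ≤ r−2, and let i be an odd integer. Then the multiplicative order of the element i·(2^{r-s}−i)^{-1} in the unit group (Z/2^r)^× divides 2^s. Consequently the class of i/(2^{r-s}−i) in (Z/2^r)^×/{±1} has order dividing 2^s. -/
import Mathlib

lemma sq_step' (j : ℕ) (y : ℤ) (hj : 1 ≤ j) (h : (2:ℤ)^j ∣ y - 1) :
    (2:ℤ)^(j+1) ∣ y^2 - 1 := by
  have h2 : (2:ℤ) ∣ y + 1 := by
    have h1 : (2:ℤ) ∣ y - 1 := dvd_trans (dvd_pow_self 2 (by omega)) h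
    omega
  have he : y^2 - 1 = (y - 1) * (y + 1) := by ring
  rw [he, pow_succ]
  exact mul_dvd_mul h h2

/-- For `r ≥ 2`, `1 ≤ s ≤ r−2` and `i` odd, the unit `i·(2^{r-s}−i)⁻¹` of `(ℤ/2^r)ˣ`
has order dividing `2^s`, and hence so does its class in `(ℤ/2^r)ˣ/{±1}`. -/
theorem stmt3 (r s : ℕ) (i : ℤ) (hr : 2 ≤ r) (hs1 : 1 ≤ s) (hs2 : s ≤ r - 2)
    (hi : Odd i) (u : (ZMod (2 ^ r))ˣ)
    (hu : (u : ZMod (2 ^ r)) * ((2 ^ (r - s) : ZMod (2 ^ r)) - (i : ZMod (2 ^ r)))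
      = (i : ZMod (2 ^ r))) :
    u ^ (2 ^ s) = 1 ∧
      (QuotientGroup.mk u :
        (ZMod (2 ^ r))ˣ ⧸ Subgroup.zpowers (-1 : (ZMod (2 ^ r))ˣ)) ^ (2 ^ s) = 1 := by
  haveI : NeZero (2 ^ r) := ⟨pow_ne_zero _ two_ne_zero⟩
  set x : ℤ := ((u : ZMod (2^r)).val : ℤ) with hx
  have hxu : ((x : ZMod (2^r))) = (u : ZMod (2^r)) := by
    simp [hx]
  have hu' : ((2:ℤ)^r) ∣ x * (2^(r-s) - i) - i := by
    have : ((x * (2^(r-s) - i) - i : ℤ) : ZMod (2^r)) = 0 := by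
      push_cast
      rw [hxu, hu]
      ring
    have := (ZMod.intCast_zmod_eq_zero_iff_dvd _ (2^r)).mp this
    exact_mod_cast this
  have hdvd1 : ((2:ℤ)^(r-s)) ∣ (x+1) * i := by
    have h1 : ((2:ℤ)^(r-s)) ∣ x * (2^(r-s) - i) - i :=
      dvd_trans (pow_dvd_pow 2 (Nat.sub_le r s)) hu'
    have h2 : ((2:ℤ)^(r-s)) ∣ x * 2^(r-s) := dvd_mul_left _ _
    have he : (x+1) * i = x * 2^(r-s) - (x * (2^(r-s) - i) - i) := by ring
    rw [he]
    exact dvd_sub h2 h1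
  have hcop : IsCoprime ((2:ℤ)^(r-s)) i := by
    apply IsCoprime.pow_left
    obtain ⟨m, hm⟩ := hi
    exact ⟨-m, 1, by rw [hm]; ring⟩
  have h2 : ((2:ℤ)^(r-s)) ∣ x + 1 := hcop.dvd_of_dvd_mul_right hdvd1
  have hrs : 2 ≤ r - s := by omega
  have key : ∀ k, 1 ≤ k → (2:ℤ)^(r-s+k) ∣ x^(2^k) - 1 := by
    intro k hk
    induction k with
    | zero => omega
    | succ k ih =>
      rcases Nat.eq_zero_or_pos k with hk0 | hk1
      · subst hk0
        have hodd : (2:ℤ) ∣ x - 1 := by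
          have : (2:ℤ) ∣ x + 1 := dvd_trans (dvd_pow_self 2 (by omega)) h2
          omega
        have he : x^(2^1) - 1 = (x+1) * (x-1) := by ring
        rw [he, pow_succ]
        exact mul_dvd_mul h2 hodd
      · have ihh := ih hk1
        have he : x^(2^(k+1)) = (x^(2^k))^2 := by
          rw [← pow_mul, pow_succ]
        rw [he, show r - s + (k+1) = (r - s + k) + 1 by omega]
        exact sq_step' _ _ (by omega) ihh
  have hfin : (2:ℤ)^r ∣ x^(2^s) - 1 := by
    have := key s hs1
    rwa [show r - s + s = r by omega] at this
  have hzu : (u : ZMod (2^r))^(2^s) = 1 := by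
    have : ((x^(2^s) - 1 : ℤ) : ZMod (2^r)) = 0 := by
      apply (ZMod.intCast_zmod_eq_zero_iff_dvd _ (2^r)).mpr
      exact_mod_cast hfin
    push_cast at this
    rw [hxu] at this
    linear_combination this
  have h1 : u ^ (2^s) = 1 := by
    ext
    push_cast
    exact hzu
  refine ⟨h1, ?_⟩
  rw [← QuotientGroup.mk_pow, h1]
  rfl
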